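/- For ν ∈ ℤ_{≥0} and 0 ≤ k ≤ 2ν, the rational function [2ν choose k]_q · (q^ν + q^{−ν})/(q^{ν−k} + q^{−(ν−k)}) ∈ ℂ(q) has degree (as defined by the leading power of q) equal to (2ν−k)k + ν − |ν−k|, and its leading coefficient is 1/2 if k = ν > 0 and 1 otherwise. -/

import Mathlib

/-!
Both the degree and the leading coefficient are multiplicative on nonzero rational functions
(for the latter because the normalised denominator is monic), so they can be read off factor by
factor. Since `[n] = (q^{2n} - 1) / ((q^2 - 1) q^{n-1})`, the quantum integer `[n]` has leading
term `q^{n-1}`; hence `[k]!` has leading term `q^{k choose 2}` and `[m choose k]` has leading term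
`q^{(m-k)k}`. Finally `{a} = (q^{2|a|} + 1) / q^{|a|}` has leading term `q^{|a|}`, with
coefficient `2` exactly when `a = 0`.
-/

set_option maxHeartbeats 1000000
set_option synthInstance.maxHeartbeats 1000000

noncomputable section

/-- `K = ℂ(q)`. -/
abbrev Kq : Type := RatFunc ℂ

/-- The variable `q`. -/
def qq : Kq := RatFunc.X

/-- The quantum integer `[n] = (qⁿ − q⁻ⁿ)/(q − q⁻¹)`. -/
noncomputable def qint (n : ℤ) : Kq := (qq ^ n - qq ^ (-n)) / (qq - qq⁻¹)

/-- The quantum factorial `[k]!`. -/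
noncomputable def qfac (k : ℕ) : Kq := ∏ i ∈ Finset.range k, qint (i + 1)

/-- The balanced Gaussian binomial coefficient `[m choose k] = [m]!/([m−k]![k]!)`. -/
noncomputable def qbinom (m k : ℕ) : Kq := qfac m / (qfac (m - k) * qfac k)

/-- `{a} = q^a + q^{−a}`. -/
noncomputable def qbrace (a : ℤ) : Kq := qq ^ a + qq ^ (-a)

/-- The leading coefficient of a rational function. -/
noncomputable def lcoef (c : Kq) : ℂ := c.num.leadingCoeff / c.denom.leadingCoeff

open Polynomial

lemma lcoef_eq_leadingCoeff_num (x : Kq) : lcoef x = x.num.leadingCoeff := by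
  rw [lcoef, (RatFunc.monic_denom x).leadingCoeff, div_one]

def lcoefHom : Kq →*₀ ℂ where
  toFun := lcoef
  map_zero' := by simp [lcoef_eq_leadingCoeff_num]
  map_one' := by simp [lcoef_eq_leadingCoeff_num]
  map_mul' x y := by
    have h := congrArg leadingCoeff (RatFunc.num_denom_mul x y)
    simpa [lcoef_eq_leadingCoeff_num, (RatFunc.monic_denom _).leadingCoeff] using h

lemma lcoef_algebraMap (p : ℂ[X]) : lcoef (algebraMap ℂ[X] Kq p) = p.leadingCoeff := by
  rw [lcoef_eq_leadingCoeff_num, RatFunc.num_algebraMap]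

structure HasLeadingTerm (x : Kq) (d : ℤ) (c : ℂ) : Prop where
  ne_zero : x ≠ 0
  intDegree_eq : x.intDegree = d
  lcoef_eq : lcoef x = c

namespace HasLeadingTerm

variable {x y : Kq} {d e : ℤ} {c b : ℂ}

theorem mul (hx : HasLeadingTerm x d c) (hy : HasLeadingTerm y e b) :
    HasLeadingTerm (x * y) (d + e) (c * b) where
  ne_zero := mul_ne_zero hx.ne_zero hy.ne_zero
  intDegree_eq := by
    rw [RatFunc.intDegree_mul hx.ne_zero hy.ne_zero, hx.intDegree_eq, hy.intDegree_eq]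
  lcoef_eq := by rw [← hx.lcoef_eq, ← hy.lcoef_eq]; exact map_mul lcoefHom x y

theorem div (hx : HasLeadingTerm x d c) (hy : HasLeadingTerm y e b) :
    HasLeadingTerm (x / y) (d - e) (c / b) where
  ne_zero := div_ne_zero hx.ne_zero hy.ne_zero
  intDegree_eq := by
    rw [RatFunc.intDegree_div hx.ne_zero hy.ne_zero, hx.intDegree_eq, hy.intDegree_eq]
  lcoef_eq := by rw [← hx.lcoef_eq, ← hy.lcoef_eq]; exact map_div₀ lcoefHom x y

end HasLeadingTerm

lemma hasLeadingTerm_algebraMap {p : ℂ[X]} (hp : p ≠ 0) :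
    HasLeadingTerm (algebraMap ℂ[X] Kq p) p.natDegree p.leadingCoeff where
  ne_zero := RatFunc.algebraMap_ne_zero hp
  intDegree_eq := RatFunc.intDegree_polynomial
  lcoef_eq := lcoef_algebraMap p

lemma hasLeadingTerm_qq_pow (m : ℕ) : HasLeadingTerm (qq ^ m) m 1 := by
  simpa [qq, RatFunc.algebraMap_X] using
    hasLeadingTerm_algebraMap (pow_ne_zero m (X_ne_zero (R := ℂ)))

lemma hasLeadingTerm_qq_pow_sub_one {m : ℕ} (hm : m ≠ 0) : HasLeadingTerm (qq ^ m - 1) m 1 := by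
  have hmonic : (X ^ m - 1 : ℂ[X]).Monic := by simpa using monic_X_pow_sub_C (1 : ℂ) hm
  have hdeg : (X ^ m - 1 : ℂ[X]).natDegree = m := by
    simpa using natDegree_X_pow_sub_C (r := (1 : ℂ))
  simpa [qq, RatFunc.algebraMap_X, hmonic.leadingCoeff, hdeg] using
    hasLeadingTerm_algebraMap hmonic.ne_zero

lemma hasLeadingTerm_qq_pow_add_one (m : ℕ) :
    HasLeadingTerm (qq ^ m + 1) m (if m = 0 then 2 else 1) := by
  rcases eq_or_ne m 0 with rfl | hm
  · have h := hasLeadingTerm_algebraMap (C_ne_zero.mpr (two_ne_zero (α := ℂ)))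
    rw [natDegree_C, leadingCoeff_C, C_ofNat, map_ofNat] at h
    simpa [one_add_one_eq_two] using h
  · have hmonic : (X ^ m + 1 : ℂ[X]).Monic := by simpa using monic_X_pow_add_C (1 : ℂ) hm
    have hdeg : (X ^ m + 1 : ℂ[X]).natDegree = m := by
      simpa using natDegree_X_pow_add_C (r := (1 : ℂ))
    simpa [qq, RatFunc.algebraMap_X, hmonic.leadingCoeff, hdeg, hm] using
      hasLeadingTerm_algebraMap hmonic.ne_zero

lemma qq_ne_zero : qq ≠ 0 := RatFunc.X_ne_zero

lemma qint_natCast_add_one (n : ℕ) :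
    qint ((n : ℤ) + 1) = (qq ^ (2 * (n + 1)) - 1) / ((qq ^ 2 - 1) * qq ^ n) := by
  have hq := qq_ne_zero
  have h2 : (qq ^ 2 - 1 : Kq) ≠ 0 := (hasLeadingTerm_qq_pow_sub_one two_ne_zero).ne_zero
  have h1 : (qq - qq⁻¹ : Kq) ≠ 0 := by
    rwa [← mul_ne_zero_iff_right hq, sub_mul, inv_mul_cancel₀ hq, ← sq]
  rw [qint, ← Nat.cast_add_one, zpow_neg, zpow_natCast,
    div_eq_div_iff h1 (mul_ne_zero h2 (pow_ne_zero n hq))]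
  field_simp
  ring

lemma hasLeadingTerm_qint_natCast_add_one (n : ℕ) :
    HasLeadingTerm (qint ((n : ℤ) + 1)) n 1 := by
  have h := (hasLeadingTerm_qq_pow_sub_one (m := 2 * (n + 1)) (by omega)).div
    ((hasLeadingTerm_qq_pow_sub_one two_ne_zero).mul (hasLeadingTerm_qq_pow n))
  rw [← qint_natCast_add_one] at h
  convert h using 1 <;> push_cast <;> ring

lemma hasLeadingTerm_qfac (k : ℕ) : HasLeadingTerm (qfac k) (k.choose 2) 1 := by
  induction k with
  | zero => simpa [qfac] using hasLeadingTerm_qq_pow 0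
  | succ n ih =>
    have h := ih.mul (hasLeadingTerm_qint_natCast_add_one n)
    rw [show qfac (n + 1) = qfac n * qint ((n : ℤ) + 1) from Finset.prod_range_succ _ _,
      Nat.choose_succ_succ, Nat.choose_one_right]
    simpa [add_comm] using h

lemma Nat.add_choose_two (a b : ℕ) : (a + b).choose 2 = a.choose 2 + b.choose 2 + a * b := by
  have h : ((a + b).choose 2 : ℚ) = a.choose 2 + b.choose 2 + a * b := by
    simp only [Nat.cast_choose_two]
    push_cast
    ring
  exact_mod_cast h

lemma hasLeadingTerm_qbinom {m k : ℕ} (hk : k ≤ m) :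
    HasLeadingTerm (qbinom m k) ((m - k) * k : ℕ) 1 := by
  obtain ⟨j, rfl⟩ := Nat.exists_eq_add_of_le' hk
  have h := (hasLeadingTerm_qfac (j + k)).div ((hasLeadingTerm_qfac j).mul (hasLeadingTerm_qfac k))
  rw [qbinom, Nat.add_sub_cancel]
  convert h using 1 <;> push_cast [Nat.add_choose_two] <;> ring

lemma qbrace_eq (a : ℤ) : qbrace a = (qq ^ (2 * a.natAbs) + 1) / qq ^ a.natAbs := by
  have h : qbrace a = qq ^ a.natAbs + (qq ^ a.natAbs)⁻¹ := by
    obtain ⟨n, rfl | rfl⟩ := Int.eq_nat_or_neg a <;> simp [qbrace, add_comm]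
  rw [h]
  field_simp [qq_ne_zero]
  ring

lemma hasLeadingTerm_qbrace (a : ℤ) :
    HasLeadingTerm (qbrace a) |a| (if a = 0 then 2 else 1) := by
  have h := (hasLeadingTerm_qq_pow_add_one (2 * a.natAbs)).div (hasLeadingTerm_qq_pow a.natAbs)
  rw [← qbrace_eq] at h
  convert h using 1
  · push_cast; rw [Int.abs_eq_natAbs]; ring
  · simp

/-- For `0 ≤ k ≤ 2ν`, the rational function `[2ν choose k]·{ν}/{ν−k}` has degree
`(2ν−k)k + ν − |ν−k|` and leading coefficient `1/2` if `k = ν > 0` and `1` otherwise. -/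
theorem statement11 (ν k : ℕ) (hk : k ≤ 2 * ν) :
    (qbinom (2 * ν) k * qbrace ν / qbrace ((ν : ℤ) - k)).intDegree =
      ((2 * ν : ℤ) - k) * k + ν - |(ν : ℤ) - k| ∧
    lcoef (qbinom (2 * ν) k * qbrace ν / qbrace ((ν : ℤ) - k)) =
      (if k = ν ∧ 0 < ν then (1 / 2 : ℂ) else 1) := by
  obtain ⟨-, hdeg, hlc⟩ :=
    ((hasLeadingTerm_qbinom hk).mul (hasLeadingTerm_qbrace ν)).div (hasLeadingTerm_qbrace (ν - k))
  refine ⟨by rw [hdeg]; push_cast [hk]; simp, ?_⟩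
  rw [hlc]
  split_ifs <;> first | omega | norm_num

end
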